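/- Let S be a finitely generated submonoid of ℕ^d that is irreducible and has a Frobenius element f ∈ F(S). Then either PF(S) = {f}, or there exists g ∈ ℕ^d with 2g = f and PF(S) = {f, g} (that is, PF(S) = {f, f/2}). -/

import Mathlib

open scoped BigOperators

/-- The natural cast of an element of `ℕ^d` into `ℚ^d`. -/
def toQ {d : ℕ} (x : Fin d → ℕ) : Fin d → ℚ := fun i => (x i : ℚ)

/-- The natural cast of an element of `ℕ^d` into `ℤ^d`. -/
def natToZ {d : ℕ} (x : Fin d → ℕ) : Fin d → ℤ := fun i => (x i : ℤ)

/-- The cone `pos(S)` of a submonoid `S ⊆ ℕ^d`: all nonnegative rational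
combinations of elements of `S`, as a subset of `ℚ^d`. -/
def posCone {d : ℕ} (S : AddSubmonoid (Fin d → ℕ)) : Set (Fin d → ℚ) :=
  {q | ∃ (k : ℕ) (c : Fin k → ℚ) (s : Fin k → (Fin d → ℕ)),
    (∀ i, 0 ≤ c i) ∧ (∀ i, s i ∈ S) ∧ q = ∑ i, c i • toQ (s i)}

/-- The gap set `H(S) = (pos(S) \ S) ∩ ℕ^d`. -/
def gaps {d : ℕ} (S : AddSubmonoid (Fin d → ℕ)) : Set (Fin d → ℕ) :=
  {x | toQ x ∈ posCone S ∧ x ∉ S}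

/-- The set of pseudo-Frobenius elements of `S`. -/
def PF {d : ℕ} (S : AddSubmonoid (Fin d → ℕ)) : Set (Fin d → ℕ) :=
  {a | a ∈ gaps S ∧ ∀ s ∈ S, s ≠ 0 → a + s ∈ S}

/-- A term order on `ℕ^d`: a total order compatible with addition for which
`0` is the least element. -/
def IsTermOrder {d : ℕ} (r : (Fin d → ℕ) → (Fin d → ℕ) → Prop) : Prop :=
  (∀ a b, r a b ∨ r b a) ∧ (∀ a b, r a b → r b a → a = b) ∧
    (∀ a b c, r a b → r b c → r a c) ∧ (∀ a, r 0 a) ∧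
    (∀ a b c, r a b → r (a + c) (b + c))

/-- The set of Frobenius elements of `S`: maxima of `H(S)` for some term order. -/
def FrobSet {d : ℕ} (S : AddSubmonoid (Fin d → ℕ)) : Set (Fin d → ℕ) :=
  {f | f ∈ gaps S ∧ ∃ r, IsTermOrder r ∧ ∀ h ∈ gaps S, r h f}

/-- The Apéry set of `S` relative to `b`:
`Ap(S,b) = {a ∈ S : a - b ∈ pos(S) \ S}`, the difference taken in `ℚ^d`. -/
def Apery {d : ℕ} (S : AddSubmonoid (Fin d → ℕ)) (b : Fin d → ℕ) : Set (Fin d → ℕ) :=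
  {a | a ∈ S ∧ (toQ a - toQ b) ∈ posCone S ∧ ¬ ∃ s ∈ S, toQ s = toQ a - toQ b}

/-- The partial order `≼_S`: `x ≼_S y` iff `y - x ∈ S`. -/
def leS {d : ℕ} (S : AddSubmonoid (Fin d → ℕ)) (x y : Fin d → ℕ) : Prop :=
  ∃ s ∈ S, x + s = y

/-- `a` is a `≼_S`-maximal element of `X`. -/
def MaximalIn {d : ℕ} (S : AddSubmonoid (Fin d → ℕ)) (X : Set (Fin d → ℕ))
    (a : Fin d → ℕ) : Prop :=
  a ∈ X ∧ ∀ a' ∈ X, a' ≠ a → ¬ leS S a a'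

/-- `S` is irreducible: it is not the intersection of two submonoids of `ℕ^d`
each properly containing it. -/
def IrreducibleMonoid {d : ℕ} (S : AddSubmonoid (Fin d → ℕ)) : Prop :=
  ¬ ∃ S₁ S₂ : AddSubmonoid (Fin d → ℕ), S < S₁ ∧ S < S₂ ∧
    (S : Set (Fin d → ℕ)) = (S₁ : Set (Fin d → ℕ)) ∩ (S₂ : Set (Fin d → ℕ))

/-- The multiplicity of `S`: componentwise infimum of `S \ {0}`. -/
noncomputable def mult {d : ℕ} (S : AddSubmonoid (Fin d → ℕ)) : Fin d → ℕ :=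
  fun i => sInf {n | ∃ s ∈ S, s ≠ 0 ∧ s i = n}

/-- `S` is a PI-monoid: `S = (a + T) ∪ {0}` for some submonoid `T` of `ℕ^d`
and some `a ∈ T \ {0}`. -/
def IsPIMonoid {d : ℕ} (S : AddSubmonoid (Fin d → ℕ)) : Prop :=
  ∃ (T : AddSubmonoid (Fin d → ℕ)) (a : Fin d → ℕ), a ∈ T ∧ a ≠ 0 ∧
    (S : Set (Fin d → ℕ)) = {x | ∃ t ∈ T, x = a + t} ∪ {0}

/-- `G` is a minimal system of generators of `S`. -/
def IsMinimalGenSet {d : ℕ} (S : AddSubmonoid (Fin d → ℕ)) (G : Set (Fin d → ℕ)) : Prop :=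
  AddSubmonoid.closure G = S ∧ ∀ G' ⊂ G, AddSubmonoid.closure G' ≠ S

/-!
If `x` is pseudo-Frobenius, then `x + s ∈ S` for every nonzero `s ∈ S`, so the monoid generated
by `S` and `x` is just `S ∪ ℕx`. For a Frobenius element `f` also `2f ∈ S`, hence `S ∪ {f}` is a
monoid, and irreducibility forces every monoid `T ⊋ S` to contain `f`: otherwise
`S = T ∩ (S ∪ {f})`. Taking `T = S ∪ ℕx` for `x ∈ PF(S) \ {f}` gives `f = kx` with `k ≥ 2`. If
`k ≥ 3`, then `(k - 1)x` is again pseudo-Frobenius and different from `f`, so `f = j(k - 1)x`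
with `j ≥ 2`, which is too large. Hence `f = 2x`.
-/

section ConicalMonoid

variable {M : Type*} [AddCommMonoid M] [Subsingleton (AddUnits M)] {S : AddSubmonoid M} {x : M}

theorem AddSubmonoid.nsmul_add_mem_of_forall_add_mem (hx : ∀ s ∈ S, s ≠ 0 → x + s ∈ S)
    (n : ℕ) {s : M} (hs : s ∈ S) (hs0 : s ≠ 0) : n • x + s ∈ S := by
  induction n with
  | zero => simpa using hs
  | succ n ih =>
    rw [succ_nsmul', add_assoc]
    exact hx _ ih fun h => hs0 (add_eq_zero.mp h).2

theorem AddSubmonoid.mem_sup_closure_singleton_iff (hx : ∀ s ∈ S, s ≠ 0 → x + s ∈ S) {y : M} :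
    y ∈ S ⊔ closure {x} ↔ y ∈ S ∨ ∃ n : ℕ, n • x = y := by
  constructor
  · intro hy
    obtain ⟨s, hs, z, hz, rfl⟩ := mem_sup.mp hy
    obtain ⟨n, rfl⟩ := mem_closure_singleton.mp hz
    by_cases hs0 : s = 0
    · exact Or.inr ⟨n, by simp [hs0]⟩
    · exact Or.inl (add_comm s _ ▸ nsmul_add_mem_of_forall_add_mem hx n hs hs0)
  · rintro (hy | ⟨n, rfl⟩)
    · exact mem_sup_left hy
    · exact mem_sup_right (nsmul_mem (subset_closure (Set.mem_singleton x)) n)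

end ConicalMonoid

section PseudoFrobenius

variable {d : ℕ} {S : AddSubmonoid (Fin d → ℕ)}

theorem toQ_add (x y : Fin d → ℕ) : toQ (x + y) = toQ x + toQ y := by
  funext i; simp [toQ]

theorem toQ_nsmul (n : ℕ) (x : Fin d → ℕ) : toQ (n • x) = (n : ℚ) • toQ x := by
  funext i; simp [toQ]

theorem toQ_mem_posCone {s : Fin d → ℕ} (hs : s ∈ S) : toQ s ∈ posCone S :=
  ⟨1, fun _ => 1, fun _ => s, fun _ => zero_le_one, fun _ => hs, by simp⟩

theorem add_mem_posCone {p q : Fin d → ℚ} (hp : p ∈ posCone S) (hq : q ∈ posCone S) :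
    p + q ∈ posCone S := by
  obtain ⟨k, c, s, hc, hs, rfl⟩ := hp
  obtain ⟨l, c', s', hc', hs', rfl⟩ := hq
  refine ⟨k + l, Fin.append c c', Fin.append s s', fun i => ?_, fun i => ?_, ?_⟩
  · cases i using Fin.addCases <;> simp [hc, hc']
  · cases i using Fin.addCases <;> simp [hs, hs']
  · simp [Fin.sum_univ_add]

theorem smul_mem_posCone {q : Fin d → ℚ} {c : ℚ} (hc : 0 ≤ c) (hq : q ∈ posCone S) :
    c • q ∈ posCone S := by
  obtain ⟨k, c', s, hc', hs, rfl⟩ := hq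
  exact ⟨k, fun i => c * c' i, s, fun i => mul_nonneg hc (hc' i), hs, by
    simp [Finset.smul_sum, smul_smul]⟩

theorem add_mem_gaps {x y : Fin d → ℕ} (hx : toQ x ∈ posCone S) (hy : toQ y ∈ posCone S)
    (hxy : x + y ∉ S) : x + y ∈ gaps S :=
  ⟨toQ_add x y ▸ add_mem_posCone hx hy, hxy⟩

theorem nsmul_mem_PF {x : Fin d → ℕ} (hx : x ∈ PF S) {n : ℕ} (hn : n • x ∉ S) :
    n • x ∈ PF S :=
  ⟨⟨toQ_nsmul n x ▸ smul_mem_posCone n.cast_nonneg hx.1.1, hn⟩,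
    fun _ hs hs0 => AddSubmonoid.nsmul_add_mem_of_forall_add_mem hx.2 n hs hs0⟩

theorem IsTermOrder.le_add_right {r : (Fin d → ℕ) → (Fin d → ℕ) → Prop} (hr : IsTermOrder r)
    (a b : Fin d → ℕ) : r a (a + b) := by
  simpa [add_comm] using hr.2.2.2.2 0 b a (hr.2.2.2.1 b)

theorem eq_zero_of_add_mem_gaps_of_mem_FrobSet {f s : Fin d → ℕ} (hf : f ∈ FrobSet S)
    (hfs : f + s ∈ gaps S) : s = 0 := by
  obtain ⟨-, r, hr, hmax⟩ := hf
  exact add_eq_left.mp (hr.2.1 _ _ (hmax _ hfs) (hr.le_add_right f s))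

theorem mem_PF_of_mem_FrobSet {f : Fin d → ℕ} (hf : f ∈ FrobSet S) : f ∈ PF S :=
  ⟨hf.1, fun _ hs hs0 => by_contra fun hfs =>
    hs0 (eq_zero_of_add_mem_gaps_of_mem_FrobSet hf (add_mem_gaps hf.1.1 (toQ_mem_posCone hs) hfs))⟩

theorem add_self_mem_of_mem_FrobSet {f : Fin d → ℕ} (hf : f ∈ FrobSet S) : f + f ∈ S :=
  by_contra fun hff => hf.1.2 <|
    eq_zero_of_add_mem_gaps_of_mem_FrobSet hf (add_mem_gaps hf.1.1 hf.1.1 hff) ▸ S.zero_mem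

theorem mem_sup_closure_singleton_iff_of_mem_FrobSet {f : Fin d → ℕ} (hf : f ∈ FrobSet S)
    {y : Fin d → ℕ} : y ∈ S ⊔ AddSubmonoid.closure {f} ↔ y ∈ S ∨ y = f := by
  have hff0 : f + f ≠ 0 := fun h => hf.1.2 ((add_eq_zero.mp h).1 ▸ S.zero_mem)
  rw [AddSubmonoid.mem_sup_closure_singleton_iff (mem_PF_of_mem_FrobSet hf).2]
  constructor
  · rintro (hy | ⟨_ | _ | n, rfl⟩)
    · exact Or.inl hy
    · exact Or.inl (zero_nsmul f ▸ S.zero_mem)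
    · exact Or.inr (one_nsmul f)
    · refine Or.inl ?_
      rw [show (n + 2) • f = n • f + (f + f) by rw [add_nsmul, two_nsmul]]
      exact AddSubmonoid.nsmul_add_mem_of_forall_add_mem (mem_PF_of_mem_FrobSet hf).2 n
        (add_self_mem_of_mem_FrobSet hf) hff0
  · rintro (hy | rfl)
    · exact Or.inl hy
    · exact Or.inr ⟨1, one_nsmul _⟩

theorem mem_of_lt_of_mem_FrobSet (hirr : IrreducibleMonoid S) {f : Fin d → ℕ}
    (hf : f ∈ FrobSet S) {T : AddSubmonoid (Fin d → ℕ)} (hT : S < T) : f ∈ T := by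
  by_contra hfT
  have hlt : S < S ⊔ AddSubmonoid.closure {f} :=
    SetLike.lt_iff_le_and_exists.mpr ⟨le_sup_left, f,
      (mem_sup_closure_singleton_iff_of_mem_FrobSet hf).mpr (Or.inr rfl), hf.1.2⟩
  refine hirr ⟨T, _, hT, hlt, Set.Subset.antisymm (fun y hy => ⟨hT.le hy, AddSubmonoid.mem_sup_left hy⟩) ?_⟩
  rintro y ⟨hyT, hy⟩
  rcases (mem_sup_closure_singleton_iff_of_mem_FrobSet hf).mp hy with hy | rfl
  · exact hy
  · exact absurd hyT hfT

theorem exists_nsmul_eq_of_mem_PF (hirr : IrreducibleMonoid S) {f x : Fin d → ℕ}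
    (hf : f ∈ FrobSet S) (hx : x ∈ PF S) (hxf : x ≠ f) : ∃ k, 2 ≤ k ∧ k • x = f := by
  have hlt : S < S ⊔ AddSubmonoid.closure {x} :=
    SetLike.lt_iff_le_and_exists.mpr ⟨le_sup_left, x,
      AddSubmonoid.mem_sup_right (AddSubmonoid.subset_closure (Set.mem_singleton x)), hx.1.2⟩
  rcases (AddSubmonoid.mem_sup_closure_singleton_iff hx.2).mp
      (mem_of_lt_of_mem_FrobSet hirr hf hlt) with hfS | ⟨_ | _ | k, rfl⟩
  · exact absurd hfS hf.1.2
  · exact absurd (zero_nsmul x ▸ S.zero_mem) hf.1.2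
  · exact absurd (one_nsmul x).symm hxf
  · exact ⟨k + 2, by omega, rfl⟩

theorem add_self_eq_of_mem_PF (hirr : IrreducibleMonoid S) {f x : Fin d → ℕ}
    (hf : f ∈ FrobSet S) (hx : x ∈ PF S) (hxf : x ≠ f) : x + x = f := by
  obtain ⟨k, hk, rfl⟩ := exists_nsmul_eq_of_mem_PF hirr hf hx hxf
  obtain ⟨m, rfl⟩ : ∃ m, k = m + 2 := ⟨k - 2, by omega⟩
  have hx0 : 0 < x := pos_iff_ne_zero.mpr fun h => hx.1.2 (h ▸ S.zero_mem)
  have hsplit : (m + 2) • x = x + (m + 1) • x := by rw [add_comm x, ← succ_nsmul]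
  have hz : (m + 1) • x ∉ S := fun hz =>
    hf.1.2 (hsplit ▸ hx.2 _ hz (nsmul_pos hx0 m.succ_ne_zero).ne')
  have hzf : (m + 1) • x ≠ (m + 2) • x := fun h =>
    hx0.ne' (add_eq_right.mp (hsplit ▸ h).symm)
  obtain ⟨j, hj, hjz⟩ := exists_nsmul_eq_of_mem_PF hirr hf (nsmul_mem_PF hx hz) hzf
  have hjm : j * (m + 1) = m + 2 :=
    (nsmul_left_strictMono hx0).injective ((smul_smul j (m + 1) x).symm.trans hjz)
  obtain rfl : m = 0 := by nlinarith
  exact (two_nsmul x).symm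

end PseudoFrobenius

theorem irreducible_pf_general {d : ℕ} (S : AddSubmonoid (Fin d → ℕ))
    (hirr : IrreducibleMonoid S) (f : Fin d → ℕ) (hf : f ∈ FrobSet S) :
    PF S = {f} ∨ ∃ g : Fin d → ℕ, g + g = f ∧ PF S = {f, g} := by
  have hfPF := mem_PF_of_mem_FrobSet hf
  by_cases h : ∃ x ∈ PF S, x ≠ f
  · obtain ⟨g, hg, hgf⟩ := h
    have hgg := add_self_eq_of_mem_PF hirr hf hg hgf
    refine Or.inr ⟨g, hgg, Set.Subset.antisymm (fun y hy => ?_) ?_⟩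
    · by_cases hyf : y = f
      · exact Or.inl hyf
      · have hyy := add_self_eq_of_mem_PF hirr hf hy hyf
        refine Or.inr (nsmul_right_injective two_ne_zero ?_)
        simp only [two_nsmul, hyy, hgg]
    · simp [Set.insert_subset_iff, hfPF, hg]
  · push Not at h
    exact Or.inl (Set.eq_singleton_iff_unique_mem.mpr ⟨hfPF, h⟩)

/-- If `S` is a finitely generated irreducible submonoid of
`ℕ^d` with Frobenius element `f`, then `PF(S) = {f}` or `PF(S) = {f, f/2}`. -/
theorem irreducible_pf {d : ℕ} (S : AddSubmonoid (Fin d → ℕ)) (hfg : S.FG)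
    (hirr : IrreducibleMonoid S) (f : Fin d → ℕ) (hf : f ∈ FrobSet S) :
    PF S = {f} ∨ ∃ g : Fin d → ℕ, g + g = f ∧ PF S = {f, g} :=
  irreducible_pf_general S hirr f hf
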